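/- For simple random sampling without replacement of size n ≥ 3 from a finite real population of size N ≥ 3, E[μ̂_3] = ((1−n⁻¹)(1−2n⁻¹))/((1−N⁻¹)(1−2N⁻¹)) μ_3, where μ̂_3 = (1/n)∑(X_i−X̄)³ and μ_3 = (1/N)∑(x_j−μ)³. -/

import Mathlib

/-!
Both sides are unchanged when a constant is subtracted from the population, so centre it. For a
sample with power sums `S, P₂, P₃` we have `n² ∑ (X_i - X̄)³ = n² P₃ - 3 n S P₂ + 2 S³`, a fixed
linear combination of the sums of `X_i³`, `X_i² X_j` and `X_i X_j X_k` over distinct indices. Under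
sampling without replacement the expectation of such a sum over `m` distinct sample positions is
`n⁽ᵐ⁾ / N⁽ᵐ⁾` times the same sum over the population, because the permutations of the population
act transitively on ordered `m`-tuples of distinct units. For a centred population the three
distinct-index sums are `P₃`, `-P₃` and `2 P₃`, and collecting terms gives the factor.
-/

open Finset

/-- Expectation under simple random sampling without replacement: the average of `g`
over all ordered samples of `n` distinct indices (i.e. embeddings `Fin n ↪ Fin N`),
each equally likely. -/
noncomputable def srsExp (N n : ℕ) (g : (Fin n ↪ Fin N) → ℝ) : ℝ :=
  (∑ σ : Fin n ↪ Fin N, g σ) / (Fintype.card (Fin n ↪ Fin N))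

section TransitiveAction

open MulAction

variable {G X Y R : Type*} [Group G] [Fintype G] [MulAction G X] [MulAction G Y]
  [Fintype X] [Fintype Y]

theorem card_nsmul_sum_eq_card_nsmul_sum_smul [AddCommMonoid R] [IsPretransitive G X]
    (F : X → R) (x₀ : X) :
    Fintype.card G • ∑ x, F x = Fintype.card X • ∑ g : G, F (g • x₀) := by
  have hconst : ∀ x, ∑ g : G, F (g • x) = ∑ g : G, F (g • x₀) := fun x => by
    obtain ⟨h, rfl⟩ := exists_smul_eq G x₀ x
    simpa only [Equiv.coe_mulRight, mul_smul] using
      Equiv.sum_comp (Equiv.mulRight h) (fun g => F (g • x₀))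
  calc Fintype.card G • ∑ x, F x = ∑ g : G, ∑ x, F (g • x) := by
        rw [← card_univ, ← sum_const]
        exact sum_congr rfl fun g _ => (Equiv.sum_comp (toPerm g) F).symm
    _ = ∑ x, ∑ g : G, F (g • x₀) := by rw [sum_comm]; exact sum_congr rfl fun x _ => hconst x
    _ = Fintype.card X • ∑ g : G, F (g • x₀) := by rw [sum_const, card_univ]

theorem card_mul_sum_comp_eq_of_equivariant {K : Type*} [Field K] [CharZero K]
    [IsPretransitive G X] [IsPretransitive G Y] (r : X → Y) (hr : ∀ (g : G) x, r (g • x) = g • r x)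
    (x₀ : X) (F : Y → K) :
    (Fintype.card Y : K) * ∑ x, F (r x) = Fintype.card X * ∑ y, F y := by
  have hX := card_nsmul_sum_eq_card_nsmul_sum_smul (G := G) (F ∘ r) x₀
  have hY := card_nsmul_sum_eq_card_nsmul_sum_smul (G := G) F (r x₀)
  simp only [Function.comp_apply, hr, nsmul_eq_mul] at hX hY
  have hG : (Fintype.card G : K) ≠ 0 := by exact_mod_cast Fintype.card_ne_zero
  apply mul_left_cancel₀ hG
  linear_combination (Fintype.card Y : K) * hX - (Fintype.card X : K) * hY

end TransitiveAction

section Sampling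

variable {N n m : ℕ}

theorem srsExp_comp_trans (hnN : n ≤ N) (t : Fin m ↪ Fin n) (F : (Fin m ↪ Fin N) → ℝ) :
    srsExp N n (fun σ => F (t.trans σ)) = srsExp N m F := by
  have := Equiv.Perm.isMultiplyPretransitive (Fin N) n
  have := Equiv.Perm.isMultiplyPretransitive (Fin N) m
  set σ₀ := Fin.castLEEmb hnN
  have key := card_mul_sum_comp_eq_of_equivariant (G := Equiv.Perm (Fin N))
    (fun σ : Fin n ↪ Fin N => t.trans σ) (fun g σ => by ext; rfl) σ₀ F
  have hX : (Fintype.card (Fin n ↪ Fin N) : ℝ) ≠ 0 := by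
    exact_mod_cast (Fintype.card_pos_iff.mpr ⟨σ₀⟩).ne'
  have hY : (Fintype.card (Fin m ↪ Fin N) : ℝ) ≠ 0 := by
    exact_mod_cast (Fintype.card_pos_iff.mpr ⟨t.trans σ₀⟩).ne'
  rw [srsExp, srsExp, div_eq_div_iff hX hY]
  linear_combination key

theorem srsExp_add (f g : (Fin n ↪ Fin N) → ℝ) :
    srsExp N n (fun σ => f σ + g σ) = srsExp N n f + srsExp N n g := by
  simp only [srsExp, sum_add_distrib, add_div]

theorem srsExp_sub (f g : (Fin n ↪ Fin N) → ℝ) :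
    srsExp N n (fun σ => f σ - g σ) = srsExp N n f - srsExp N n g := by
  simp only [srsExp, sum_sub_distrib, sub_div]

theorem srsExp_const_mul (c : ℝ) (f : (Fin n ↪ Fin N) → ℝ) :
    srsExp N n (fun σ => c * f σ) = c * srsExp N n f := by
  simp only [srsExp, ← mul_sum, mul_div_assoc]

theorem srsExp_sum {ι : Type*} (s : Finset ι) (f : ι → (Fin n ↪ Fin N) → ℝ) :
    srsExp N n (fun σ => ∑ i ∈ s, f i σ) = ∑ i ∈ s, srsExp N n (f i) := by
  simp only [srsExp, sum_div]
  exact sum_comm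

end Sampling

noncomputable def sumDistinct {α R : Type*} [Fintype α] [AddCommMonoid R] (m : ℕ)
    (P : (Fin m → R) → R) (a : α → R) : R :=
  ∑ τ : Fin m ↪ α, P (a ∘ τ)

section DistinctSums

variable {α R : Type*} [Fintype α] [CommRing R]

theorem sum_compl_range_embedding [DecidableEq α] {m : ℕ} (e : Fin m ↪ α) (f : α → R) :
    ∑ i : {i // i ∉ Set.range e}, f i = ∑ i, f i - ∑ k, f (e k) := by
  have hrange : ∑ i : {i // i ∈ Set.range e}, f i = ∑ k, f (e k) :=
    (Fintype.sum_equiv (Equiv.ofInjective e e.injective) _ _ fun _ => rfl).symm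
  rw [← hrange]
  convert eq_sub_of_add_eq' (Fintype.sum_subtype_add_sum_subtype (· ∈ Set.range e) f)

theorem sum_embedding_succ {m : ℕ} (f : α → R) (G : (Fin m ↪ α) → R) :
    ∑ τ : Fin (m + 1) ↪ α, f (τ 0) * G ((Fin.succEmb m).trans τ)
      = ∑ e : Fin m ↪ α, (∑ i, f i - ∑ k, f (e k)) * G e := by
  classical
  rw [← Equiv.sum_comp (Equiv.embeddingFinSucc m α).symm, Fintype.sum_sigma]
  refine sum_congr rfl fun e _ => ?_
  rw [← sum_compl_range_embedding, sum_mul]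
  refine sum_congr rfl fun i _ => ?_
  congr 2

theorem sum_embedding_one (F : α → R) : ∑ τ : Fin 1 ↪ α, F (τ 0) = ∑ i, F i :=
  Fintype.sum_equiv Equiv.uniqueEmbeddingEquivResult _ _ fun _ => rfl

theorem sum_embedding_two (f g : α → R) :
    ∑ τ : Fin 2 ↪ α, f (τ 0) * g (τ 1) = (∑ i, f i) * ∑ i, g i - ∑ i, f i * g i := by
  refine (sum_embedding_succ f (fun e => g (e 0))).trans ?_
  simp only [Fin.sum_univ_one]
  rw [sum_embedding_one (fun j => (∑ i, f i - f j) * g j)]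
  simp only [sub_mul, sum_sub_distrib, sum_mul, mul_sum]

theorem sumDistinct_one_pow_three (a : α → R) :
    sumDistinct 1 (fun v => v 0 ^ 3) a = ∑ i, a i ^ 3 :=
  sum_embedding_one (fun i => a i ^ 3)

theorem sumDistinct_two_sq_mul (a : α → R) :
    sumDistinct 2 (fun v => v 0 ^ 2 * v 1) a = (∑ i, a i) * ∑ i, a i ^ 2 - ∑ i, a i ^ 3 := by
  refine (sum_embedding_two (fun i => a i ^ 2) a).trans ?_
  simp only [← pow_succ, mul_comm (∑ i, a i ^ 2)]

theorem sumDistinct_three_mul (a : α → R) :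
    sumDistinct 3 (fun v => v 0 * (v 1 * v 2)) a
      = (∑ i, a i) ^ 3 - 3 * (∑ i, a i) * ∑ i, a i ^ 2 + 2 * ∑ i, a i ^ 3 := by
  refine (sum_embedding_succ a (fun e => a (e 0) * a (e 1))).trans ?_
  have hsplit : ∀ e : Fin 2 ↪ α, (∑ i, a i - ∑ k, a (e k)) * (a (e 0) * a (e 1))
      = (∑ i, a i) * (a (e 0) * a (e 1)) - a (e 0) ^ 2 * a (e 1) - a (e 0) * a (e 1) ^ 2 :=
    fun e => by rw [Fin.sum_univ_two]; ring
  have h11 := sum_embedding_two a a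
  have h21 := sum_embedding_two (fun i => a i ^ 2) a
  have h12 := sum_embedding_two a (fun i => a i ^ 2)
  simp only [← pow_succ, ← pow_succ', ← pow_two] at h11 h21 h12
  simp only [hsplit, sum_sub_distrib, ← mul_sum]
  linear_combination (∑ i, a i) * h11 - h21 - h12

end DistinctSums

theorem srsExp_sumDistinct {N n m : ℕ} (hnN : n ≤ N) (P : (Fin m → ℝ) → ℝ) (x : Fin N → ℝ) :
    srsExp N n (fun σ => sumDistinct m P (x ∘ σ))
      = n.descFactorial m / N.descFactorial m * sumDistinct m P x := by
  calc srsExp N n (fun σ => sumDistinct m P (x ∘ σ))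
      = ∑ t : Fin m ↪ Fin n, srsExp N n (fun σ => P (x ∘ t.trans σ)) := srsExp_sum _ _
    _ = ∑ t : Fin m ↪ Fin n, srsExp N m (fun τ => P (x ∘ τ)) :=
        sum_congr rfl fun t _ => srsExp_comp_trans hnN t (fun τ => P (x ∘ τ))
    _ = n.descFactorial m / N.descFactorial m * sumDistinct m P x := by
        simp only [sum_const, card_univ, Fintype.card_embedding_eq, Fintype.card_fin, nsmul_eq_mul,
          srsExp, sumDistinct]
        ring

theorem Nat.cast_descFactorial_three {S : Type*} [CommRing S] (a : ℕ) :
    (a.descFactorial 3 : S) = a * (a - 1) * (a - 2) := by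
  rcases a with _ | _ | a
  · simp
  · simp
  · rw [Nat.descFactorial_succ, Nat.cast_mul, Nat.cast_descFactorial_two]
    push_cast
    ring

section CentralMoment

variable {α K : Type*} [Fintype α] [Field K]

theorem sum_sub_mean_eq_zero (hα : (Fintype.card α : K) ≠ 0) (a : α → K) :
    ∑ i, (a i - (∑ j, a j) / Fintype.card α) = 0 := by
  rw [sum_sub_distrib, sum_const, card_univ, nsmul_eq_mul, mul_div_cancel₀ _ hα, sub_self]

theorem add_const_sub_mean (hα : (Fintype.card α : K) ≠ 0) (b : α → K) (c : K) (i : α) :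
    b i + c - (∑ j, (b j + c)) / Fintype.card α = b i - (∑ j, b j) / (Fintype.card α : K) := by
  rw [sum_add_distrib, sum_const, card_univ, nsmul_eq_mul]
  field_simp
  ring

theorem card_sq_mul_sum_sub_mean_pow_three (hα : (Fintype.card α : K) ≠ 0) (a : α → K) :
    (Fintype.card α : K) ^ 2 * ∑ i, (a i - (∑ j, a j) / Fintype.card α) ^ 3
      = (Fintype.card α - 1) * (Fintype.card α - 2) * sumDistinct 1 (fun v => v 0 ^ 3) a
        - 3 * (Fintype.card α - 2) * sumDistinct 2 (fun v => v 0 ^ 2 * v 1) a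
        + 2 * sumDistinct 3 (fun v => v 0 * (v 1 * v 2)) a := by
  set n : K := (Fintype.card α : K)
  set c := (∑ j, a j) / n
  have hcube : ∀ i, (a i - c) ^ 3 = a i ^ 3 - 3 * c * a i ^ 2 + 3 * c ^ 2 * a i - c ^ 3 :=
    fun i => by ring
  have hc : n * c = ∑ j, a j := mul_div_cancel₀ _ hα
  simp only [hcube, sum_sub_distrib, sum_add_distrib, ← mul_sum, sum_const, card_univ,
    nsmul_eq_mul, sumDistinct_one_pow_three, sumDistinct_two_sq_mul, sumDistinct_three_mul]
  rw [← hc]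
  ring

theorem sum_sub_mean_pow_three_div_card (hα : (Fintype.card α : K) ≠ 0) {a b : α → K} {c : K}
    (hab : ∀ i, a i = b i + c) :
    (∑ i, (a i - (∑ j, a j) / Fintype.card α) ^ 3) / Fintype.card α
      = ((Fintype.card α : K) ^ 3)⁻¹ *
        ((Fintype.card α - 1) * (Fintype.card α - 2) * sumDistinct 1 (fun v => v 0 ^ 3) b
          - 3 * (Fintype.card α - 2) * sumDistinct 2 (fun v => v 0 ^ 2 * v 1) b
          + 2 * sumDistinct 3 (fun v => v 0 * (v 1 * v 2)) b) := by
  obtain rfl : a = fun i => b i + c := funext hab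
  rw [← card_sq_mul_sum_sub_mean_pow_three hα b, ← mul_assoc,
    show ((Fintype.card α : K) ^ 3)⁻¹ * (Fintype.card α) ^ 2 = (Fintype.card α : K)⁻¹ by
      field_simp, inv_mul_eq_div]
  simp only [add_const_sub_mean hα]

end CentralMoment

/-- `E μ̂₃ = ((1-n⁻¹)(1-2n⁻¹))/((1-N⁻¹)(1-2N⁻¹)) μ₃` under SRSWOR. -/
theorem srs_expect_mu3 (N n : ℕ) (hn : 3 ≤ n) (hN : 3 ≤ N) (hnN : n ≤ N)
    (x : Fin N → ℝ) :
    srsExp N n (fun σ => (∑ i, (x (σ i) - (∑ i', x (σ i')) / n) ^ 3) / n)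
      = ((1 - (n : ℝ)⁻¹) * (1 - 2 * (n : ℝ)⁻¹))
          / ((1 - (N : ℝ)⁻¹) * (1 - 2 * (N : ℝ)⁻¹))
        * ((∑ j, (x j - (∑ j', x j') / N) ^ 3) / N) := by
  have hN' : (3 : ℝ) ≤ N := by exact_mod_cast hN
  have hN1 : (N : ℝ) - 1 ≠ 0 := by linarith
  have hN2 : (N : ℝ) - 2 ≠ 0 := by linarith
  have hcard (k : ℕ) (hk : 3 ≤ k) : (Fintype.card (Fin k) : ℝ) ≠ 0 := by simp; omega
  set y : Fin N → ℝ := (x · - (∑ j', x j') / N)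
  have hy : ∑ j, y j = 0 := by
    simpa only [Fintype.card_fin] using sum_sub_mean_eq_zero (hcard N hN) x
  have hsample (σ : Fin n ↪ Fin N) := sum_sub_mean_pow_three_div_card (hcard n hn)
    (a := x ∘ σ) (b := y ∘ σ) fun i => (sub_add_cancel _ _).symm
  simp only [Fintype.card_fin, Function.comp_apply] at hsample
  simp only [hsample, srsExp_add, srsExp_sub, srsExp_const_mul, srsExp_sumDistinct hnN]
  simp only [sumDistinct_one_pow_three, sumDistinct_two_sq_mul, sumDistinct_three_mul, hy,
    Nat.descFactorial_one, Nat.cast_descFactorial_two, Nat.cast_descFactorial_three]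
  generalize ∑ j, y j ^ 3 = m₃
  field_simp
  ring
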